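/- arXiv:2204.11753 — 2 statements merged into one kernel-verified Lean document; each statement's English description precedes it below -/
import Mathlib

section
/- Let n ≥ 3, let d ≥ n−2 be rational, set t = d·M/S and assume t < 1 and m > n, and set ε = t/(4·A·n²·m²). If some job has length x with 2εAS ≤ x ≤ (t/(n−2) − 2ε)·AS (a 'medium' job), then either there exists a t-feasible integral partition with at most one almost-full machine, or there exists no t-feasible integral partition at all. -/
/-!
Among the feasible partitions pick one, `P`, minimising the total excess
`∑ i, max (load i - θ i) 0` over the almost-full thresholds `θ i = r i (1 + t) S / (1 + ε)`.
If two machines were almost-full, the room `∑ (θ v - load v)` left on the at most `n - 2`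
other machines would exceed the slack `∑ θ - ∑ x ≥ (t - 2ε) A S`. Minimality bounds each such
gap: a job on an almost-full machine does not fit into it (else move the job there), and if the
medium job `x_med` sits below its threshold, the gap of its machine is smaller than the difference
between any larger job on an almost-full machine and `x_med` (else swap the two). So the room is
at most `(n - 2) x_med` or at most `(n - 2) max x - x_med`, and the two bounds on the medium job
make both at most `(t - 2ε) A S`.
-/

/-- Completion time of machine `i` under integral partition `P`. -/
def btime {m n : ℕ} (x : Fin m → ℕ) (r : Fin n → ℕ) (P : Fin m → Fin n) (i : Fin n) : ℚ :=
  (∑ j ∈ Finset.univ.filter (fun j => P j = i), (x j : ℚ)) / (r i : ℚ)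

open Finset

theorem cast_card_filter_not_le {α R : Type*} [Fintype α] [Ring R] [PartialOrder R]
    [IsOrderedRing R] {p : α → Prop} [DecidablePred p] (h : 2 ≤ #(univ.filter p)) :
    (#(univ.filter fun a => ¬p a) : R) ≤ Fintype.card α - 2 := by
  have hsum := card_filter_add_card_filter_not (s := univ) p
  rw [card_univ] at hsum
  rw [← hsum, Nat.cast_add, le_sub_iff_add_le, add_comm]
  exact add_le_add_left (by simpa using Nat.mono_cast (α := R) h) _

namespace Scheduling

variable {ι κ : Type*} [Fintype ι] [DecidableEq κ]

section Load

variable {M : Type*}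

def load [AddCommMonoid M] (w : ι → M) (P : ι → κ) (i : κ) : M :=
  ∑ j ∈ univ.filter (fun j => P j = i), w j

theorem sum_load [Fintype κ] [AddCommMonoid M] (w : ι → M) (P : ι → κ) :
    ∑ i, load w P i = ∑ j, w j :=
  sum_fiberwise univ P w

variable [DecidableEq ι] [AddCommGroup M]

theorem load_update (w : ι → M) (P : ι → κ) (j : ι) (v i : κ) :
    load w (Function.update P j v) i =
      load w P i + (if v = i then w j else 0) - (if P j = i then w j else 0) := by
  simp only [load, sum_filter]
  rw [← add_sum_erase _ _ (mem_univ j), ← add_sum_erase _ _ (mem_univ j),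
    sum_congr rfl fun k hk => by rw [Function.update_of_ne (ne_of_mem_erase hk)],
    Function.update_self]
  abel

theorem load_swap (w : ι → M) (P : ι → κ) {a b : ι} (hab : P a ≠ P b) (i : κ) :
    load w (Function.update (Function.update P a (P b)) b (P a)) i =
      load w P i + (if P a = i then w b - w a else 0) + (if P b = i then w a - w b else 0) := by
  have hba : b ≠ a := fun h => hab (h ▸ rfl)
  rw [load_update, load_update, Function.update_of_ne hba]
  split_ifs <;> abel

end Load

variable {𝕜 : Type*} [Field 𝕜] [LinearOrder 𝕜]

def Feasible (w : ι → 𝕜) (c : κ → 𝕜) (P : ι → κ) : Prop :=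
  ∀ i, load w P i ≤ c i

def excess [Fintype κ] (w : ι → 𝕜) (θ : κ → 𝕜) (P : ι → κ) : 𝕜 :=
  ∑ i, max (load w P i - θ i) 0

def IsExcessMin [Fintype κ] (w : ι → 𝕜) (θ c : κ → 𝕜) (P : ι → κ) : Prop :=
  Feasible w c P ∧ ∀ P', Feasible w c P' → excess w θ P ≤ excess w θ P'

variable [Fintype κ] {w : ι → 𝕜} {θ c : κ → 𝕜}

theorem exists_isExcessMin (θ : κ → 𝕜) (h : ∃ P, Feasible w c P) :
    ∃ P, IsExcessMin w θ c P := by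
  classical
  obtain ⟨P₀, hP₀⟩ := h
  obtain ⟨P, hP, hmin⟩ := exists_min_image (univ.filter (Feasible w c)) (excess w θ)
    ⟨P₀, mem_filter.2 ⟨mem_univ _, hP₀⟩⟩
  exact ⟨P, (mem_filter.1 hP).2, fun P' hP' => hmin P' (mem_filter.2 ⟨mem_univ _, hP'⟩)⟩

variable [IsStrictOrderedRing 𝕜]

theorem excess_lt_excess {P P' : ι → κ} {q : κ}
    (hle : ∀ i, load w P' i ≤ load w P i ∨ load w P' i ≤ θ i)
    (hq : θ q < load w P q) (hq' : load w P' q < load w P q) :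
    excess w θ P' < excess w θ P := by
  refine sum_lt_sum (fun i _ => ?_) ⟨q, mem_univ q, ?_⟩
  · rcases hle i with h | h
    · exact max_le_max (by linarith) le_rfl
    · exact max_le (by linarith [le_max_right (load w P i - θ i) 0]) (le_max_right _ _)
  · rw [max_eq_left (sub_nonneg.2 hq.le)]
    exact max_lt (by linarith) (by linarith)

theorem sum_sub_sum_lt_sum_gap {P : ι → κ} {q : κ} (hq : θ q < load w P q) :
    ∑ i, θ i - ∑ j, w j < ∑ i ∈ univ.filter (fun i => ¬θ i < load w P i), (θ i - load w P i) := by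
  have hsplit := sum_filter_add_sum_filter_not univ (fun i => θ i < load w P i)
    (fun i => θ i - load w P i)
  have hover : ∑ i ∈ univ.filter (fun i => θ i < load w P i), (θ i - load w P i) < 0 :=
    sum_neg (fun i hi => sub_neg.2 (mem_filter.1 hi).2) ⟨q, mem_filter.2 ⟨mem_univ q, hq⟩⟩
  have htotal : ∑ i, (θ i - load w P i) = ∑ i, θ i - ∑ j, w j := by
    rw [sum_sub_distrib, sum_load]
  linarith

namespace IsExcessMin

variable {P P' : ι → κ}

theorem load_le (hP : IsExcessMin w θ c P) (hθc : ∀ i, θ i ≤ c i)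
    (hle : ∀ i, load w P' i ≤ load w P i ∨ load w P' i ≤ θ i) {q : κ} (hq : θ q < load w P q) :
    load w P q ≤ load w P' q := by
  have hfeas : Feasible w c P' := fun i =>
    (hle i).elim (fun h => h.trans (hP.1 i)) (fun h => h.trans (hθc i))
  by_contra! hq'
  exact (hP.2 P' hfeas).not_gt (excess_lt_excess hle hq hq')

variable [DecidableEq ι]

theorem sub_load_lt (hP : IsExcessMin w θ c P) (hθc : ∀ i, θ i ≤ c i) {j : ι} (hw : 0 < w j)
    (hj : θ (P j) < load w P (P j)) {v : κ} (hv : load w P v ≤ θ v) :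
    θ v - load w P v < w j := by
  have hjv : P j ≠ v := fun h => (h ▸ hv).not_gt hj
  by_contra! hgap
  have := hP.load_le (P' := Function.update P j v) hθc (fun i => by
    rw [load_update]
    split_ifs <;> subst_vars <;>
      first | exact absurd rfl hjv | (left; linarith) | (right; linarith)) hj
  rw [load_update, if_neg hjv.symm, if_pos rfl] at this
  linarith

theorem sub_load_lt_sub (hP : IsExcessMin w θ c P) (hθc : ∀ i, θ i ≤ c i) {a b : ι}
    (ha : load w P (P a) ≤ θ (P a)) (hb : θ (P b) < load w P (P b)) (hab : w a < w b) :
    θ (P a) - load w P (P a) < w b - w a := by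
  have hPab : P a ≠ P b := fun h => (h ▸ ha).not_gt hb
  by_contra! hgap
  have := hP.load_le (P' := Function.update (Function.update P a (P b)) b (P a)) hθc (fun i => by
    rw [load_swap w P hPab]
    split_ifs <;> subst_vars <;>
      first | exact absurd rfl hPab | (left; linarith) | (right; linarith)) hb
  rw [load_swap w P hPab, if_neg hPab, if_pos rfl] at this
  linarith

theorem card_filter_lt_load_le_one {P : ι → κ} (hP : IsExcessMin w θ c P)
    (hw : ∀ j, 0 < w j) (hθ : ∀ i, 0 ≤ θ i) (hθc : ∀ i, θ i ≤ c i) {B : 𝕜} (hB : ∀ j, w j ≤ B)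
    (jm : ι) (hsmall : (Fintype.card κ - 2 : 𝕜) * w jm ≤ ∑ i, θ i - ∑ j, w j)
    (hlarge : (Fintype.card κ - 2 : 𝕜) * B - w jm ≤ ∑ i, θ i - ∑ j, w j) :
    #(univ.filter fun i => θ i < load w P i) ≤ 1 := by
  set N := univ.filter fun i => ¬θ i < load w P i
  by_contra! hF2
  have hcardN : (#N : 𝕜) ≤ Fintype.card κ - 2 := cast_card_filter_not_le hF2
  obtain ⟨q, hqF⟩ := card_pos.1 (zero_lt_one.trans hF2)
  have hq : θ q < load w P q := (mem_filter.1 hqF).2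
  obtain ⟨j₀, hj₀, -⟩ := exists_ne_zero_of_sum_ne_zero (ne_of_gt ((hθ q).trans_lt hq))
  replace hj₀ : θ (P j₀) < load w P (P j₀) := (mem_filter.1 hj₀).2 ▸ hq
  have hgap : ∀ j, θ (P j) < load w P (P j) → ∀ v ∈ N, θ v - load w P v < w j :=
    fun j hj v hv => hP.sub_load_lt hθc (hw j) hj (not_lt.1 (mem_filter.1 hv).2)
  by_cases hcase : θ (P jm) < load w P (P jm) ∨ w j₀ ≤ w jm
  · have hle : ∀ v ∈ N, θ v - load w P v ≤ w jm := fun v hv =>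
      hcase.elim (fun h => (hgap jm h v hv).le) (fun h => (hgap j₀ hj₀ v hv).le.trans h)
    exact lt_irrefl _ <| calc
      (Fintype.card κ - 2 : 𝕜) * w jm ≤ ∑ i, θ i - ∑ j, w j := hsmall
      _ < ∑ v ∈ N, (θ v - load w P v) := sum_sub_sum_lt_sum_gap hq
      _ ≤ #N * w jm := by simpa only [nsmul_eq_mul] using sum_le_card_nsmul N _ _ hle
      _ ≤ _ := mul_le_mul_of_nonneg_right hcardN (hw jm).le
  · rw [not_or, not_lt, not_le] at hcase
    have hmN : P jm ∈ N := mem_filter.2 ⟨mem_univ _, not_lt.2 hcase.1⟩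
    have hrest := sum_le_card_nsmul (N.erase (P jm)) (fun v => θ v - load w P v) B
      fun v hv => ((hgap j₀ hj₀ v (mem_of_mem_erase hv)).trans_le (hB j₀)).le
    rw [nsmul_eq_mul, cast_card_erase_of_mem hmN] at hrest
    exact lt_irrefl _ <| calc
      (Fintype.card κ - 2 : 𝕜) * B - w jm ≤ ∑ i, θ i - ∑ j, w j := hlarge
      _ < ∑ v ∈ N, (θ v - load w P v) := sum_sub_sum_lt_sum_gap hq
      _ = (θ (P jm) - load w P (P jm)) + ∑ v ∈ N.erase (P jm), (θ v - load w P v) :=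
        (add_sum_erase N _ hmN).symm
      _ < (w j₀ - w jm) + (#N - 1) * B :=
        add_lt_add_of_lt_of_le (hP.sub_load_lt_sub hθc hcase.1 hj₀ hcase.2) hrest
      _ ≤ #N * B - w jm := by linarith [hB j₀]
      _ ≤ _ := by gcongr; exact (hw jm).le.trans (hB jm)

end IsExcessMin

end Scheduling

open Scheduling

section Arithmetic

variable {𝕜 : Type*} [Field 𝕜] [LinearOrder 𝕜] [IsStrictOrderedRing 𝕜]

theorem sub_two_mul_mul_le_div_sub {t ε Y : 𝕜} (hε : 0 ≤ ε) (ht : t < 1) (hY : 0 ≤ Y) :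
    (t - 2 * ε) * Y ≤ (1 + t) * Y / (1 + ε) - Y := by
  rw [le_sub_iff_add_le, le_div_iff₀ (by linarith)]
  nlinarith [mul_nonneg (mul_nonneg hε (by linarith : (0 : 𝕜) ≤ 1 - t + 2 * ε)) hY]

theorem mul_le_sub_two_mul_mul {k a t ε Y : 𝕜} (hk : 1 ≤ k) (hεY : 0 ≤ ε * Y)
    (ha : a ≤ (t / k - 2 * ε) * Y) : k * a ≤ (t - 2 * ε) * Y :=
  calc k * a ≤ k * ((t / k - 2 * ε) * Y) := mul_le_mul_of_nonneg_left ha (by linarith)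
    _ = t * Y - 2 * k * (ε * Y) := by field_simp
    _ ≤ (t - 2 * ε) * Y := by nlinarith

end Arithmetic

section Speeds

variable {m n : ℕ} {x : Fin m → ℕ} {r : Fin n → ℕ}

theorem btime_le_iff {P : Fin m → Fin n} {i : Fin n} (hr : 0 < r i) {T : ℚ} :
    btime x r P i ≤ T ↔ load (fun j => (x j : ℚ)) P i ≤ r i * T := by
  rw [btime, div_le_iff₀ (by exact_mod_cast hr), mul_comm]
  rfl

theorem lt_btime_iff {P : Fin m → Fin n} {i : Fin n} (hr : 0 < r i) {T : ℚ} :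
    T < btime x r P i ↔ r i * T < load (fun j => (x j : ℚ)) P i := by
  rw [btime, lt_div_iff₀ (by exact_mod_cast hr), mul_comm]
  rfl

theorem exists_btime_le_card_almostFull_le_one (hx : ∀ j, 0 < x j) (hr : ∀ i, 0 < r i)
    {T ε : ℚ} (hT : 0 ≤ T) (hε : 0 ≤ ε) (hfeas : ∃ P, ∀ i, btime x r P i ≤ T) (jm : Fin m)
    (hsmall : ((n : ℚ) - 2) * x jm ≤ (∑ i, (r i : ℚ)) * (T / (1 + ε)) - ∑ j, (x j : ℚ))
    (hlarge : ((n : ℚ) - 2) * (univ.sup x : ℕ) - x jm ≤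
      (∑ i, (r i : ℚ)) * (T / (1 + ε)) - ∑ j, (x j : ℚ)) :
    ∃ P, (∀ i, btime x r P i ≤ T) ∧ #(univ.filter fun i => T / (1 + ε) < btime x r P i) ≤ 1 := by
  obtain ⟨P, hP⟩ := exists_isExcessMin (w := fun j => (x j : ℚ)) (c := fun i => r i * T)
    (fun i => r i * (T / (1 + ε))) (hfeas.imp fun P hP i => (btime_le_iff (hr i)).1 (hP i))
  refine ⟨P, fun i => (btime_le_iff (hr i)).2 (hP.1 i), ?_⟩
  simp_rw [lt_btime_iff (hr _)]
  refine hP.card_filter_lt_load_le_one (B := ((univ.sup x : ℕ) : ℚ))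
    (fun j => by exact_mod_cast hx j) (fun i => by positivity)
    (fun i => mul_le_mul_of_nonneg_left (div_le_self hT (le_add_of_nonneg_right hε))
      (Nat.cast_nonneg _))
    (fun j => Nat.cast_le.2 (le_sup (mem_univ j))) jm ?_ ?_ <;>
    simpa only [Fintype.card_fin, ← sum_mul]

end Speeds

/-- if the instance contains a medium job, then either some `t`-feasible
partition has at most one almost-full machine, or there is no `t`-feasible partition. -/
theorem stmt_5 (m n : ℕ) (hn : 3 ≤ n) (hm : n < m)
    (x : Fin m → ℕ) (hx : ∀ j, 0 < x j)
    (r : Fin n → ℕ) (hr : ∀ i, 0 < r i)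
    (A : ℕ) (hA : A = ∑ i, r i)
    (S M : ℚ) (hS : S = (∑ j, (x j : ℚ)) / (A : ℚ))
    (hM : (A : ℚ) * M = ((Finset.univ.sup x : ℕ) : ℚ))
    (d : ℚ) (hd : ((n : ℚ) - 2) ≤ d)
    (t : ℚ) (htdef : t = d * M / S) (ht1 : t < 1)
    (ε : ℚ) (hεdef : ε = t / (4 * (A : ℚ) * (n : ℚ) ^ 2 * (m : ℚ) ^ 2))
    (hmed : ∃ j : Fin m,
        2 * ε * (A : ℚ) * S ≤ (x j : ℚ) ∧
        (x j : ℚ) ≤ (t / ((n : ℚ) - 2) - 2 * ε) * (A : ℚ) * S) :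
    (∃ P : Fin m → Fin n,
        (∀ i, btime x r P i ≤ (1 + t) * S) ∧
        (Finset.univ.filter (fun i => (1 + t) * S / (1 + ε) < btime x r P i)).card ≤ 1) ∨
    ¬ ∃ P : Fin m → Fin n, ∀ i, btime x r P i ≤ (1 + t) * S := by
  refine or_iff_not_imp_right.2 fun hfeas => ?_
  rw [not_not] at hfeas
  obtain ⟨jm, hlo, hhi⟩ := hmed
  set X := ∑ j, (x j : ℚ)
  have hAr : (A : ℚ) = ∑ i, (r i : ℚ) := by rw [hA]; push_cast; rfl
  have hA0 : 0 < (A : ℚ) :=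
    hAr ▸ sum_pos (fun i _ => by exact_mod_cast hr i) ⟨⟨0, by omega⟩, mem_univ _⟩
  have hX0 : 0 < X := sum_pos (fun j _ => by exact_mod_cast hx j) ⟨⟨0, by omega⟩, mem_univ _⟩
  have hS0 : 0 < S := hS ▸ div_pos hX0 hA0
  have hXAS : X = A * S := by rw [hS]; field_simp
  have hn2 : (1 : ℚ) ≤ n - 2 := le_sub_iff_add_le.2 (by exact_mod_cast hn)
  have hM0 : 0 ≤ M := (mul_nonneg_iff_of_pos_left hA0).1 (hM ▸ Nat.cast_nonneg _)
  have ht0 : 0 ≤ t := htdef ▸ div_nonneg (mul_nonneg (by linarith) hM0) hS0.le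
  have hε0 : 0 ≤ ε := hεdef ▸ div_nonneg ht0 (by positivity)
  have hslack : (t - 2 * ε) * X ≤ A * ((1 + t) * S / (1 + ε)) - X := by
    have hsum : (1 + t) * X / (1 + ε) = A * ((1 + t) * S / (1 + ε)) := by rw [hXAS]; ring
    linarith [sub_two_mul_mul_le_div_sub hε0 ht1 hX0.le]
  refine exists_btime_le_card_almostFull_le_one hx hr (by positivity) hε0 hfeas jm ?_ ?_ <;>
    rw [← hAr]
  · exact (mul_le_sub_two_mul_mul hn2 (mul_nonneg hε0 hX0.le)
      (by rwa [hXAS, ← mul_assoc])).trans hslack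
  · have htX : t * X = d * (univ.sup x : ℕ) := by rw [← hM, hXAS, htdef]; field_simp
    have hmax := mul_le_mul_of_nonneg_right hd (Nat.cast_nonneg (α := ℚ) (univ.sup x))
    have hlo' : 2 * ε * X ≤ x jm := by rwa [hXAS, ← mul_assoc]
    linarith
end

section
/- Reduction from split jobs to interval target (uniform machines). Fix integers n ≥ 2 and s ≥ 0 and a rational t ≥ 0. Let X be a list of m > s jobs with positive integer lengths, let S = (Σ_j x_j)/A, and let X′ be obtained from X by removing some s longest jobs. Then X admits a fractional allocation among the n machines with at most s split jobs and makespan at most (1+t)·S if and only if X′ admits an integral partition among the n machines with makespan at most (1+t)·S. -/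
/-!
Going from left to right: at most `s = #T` jobs are split, so the split jobs outside `T` can be
matched injectively with unsplit jobs of `T`. Each of those partners is at least as long and sits
entirely on one machine, so putting a split job on its partner's machine, and every other job of
`X′` on its own machine, loads no machine more than the fractional allocation did.

Going from right to left: the jobs of `T` are spread over all machines in proportion to the
residual capacities `(1+t)·S·rᵢ - loadᵢ`; their total is at least the length of `T` because
`(1+t)·S·A ≥ S·A = ∑ xⱼ`. Only the jobs of `T` are split.
-/

open Finset

section Allocation

variable {J M : Type*} [Fintype J] [Fintype M]

def splitJobs {K : Type*} [Zero K] [LinearOrder K] (f : J → M → K) : Finset J :=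
  univ.filter fun j => 1 < (univ.filter fun i => 0 < f j i).card

lemma exists_injOn_compl_of_card_le [DecidableEq J] {Q T : Finset J}
    (hQT : Q.card ≤ T.card) :
    ∃ φ : J → J, Set.InjOn φ ↑Tᶜ ∧ ∀ j ∉ T, φ j ∉ Q ∧ (φ j ∈ T ∨ φ j = j) := by
  cases isEmpty_or_nonempty J
  · exact ⟨id, fun a _ => isEmptyElim a, fun a => isEmptyElim a⟩
  obtain ⟨ι, hmaps, hinj⟩ := Set.Finite.exists_injOn_of_encard_le
    (s := ((Q \ T : Finset J) : Set J)) (t := ((T \ Q : Finset J) : Set J))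
    (Q \ T).finite_toSet (by
      simpa only [Set.encard_coe_eq_coe_finsetCard, Nat.cast_le] using
        card_sdiff_le_card_sdiff_iff.2 hQT)
  have hι : ∀ j ∈ Q, j ∉ T → ι j ∈ T ∧ ι j ∉ Q := fun j hjQ hjT => by
    simpa using hmaps (by simpa using ⟨hjQ, hjT⟩ : j ∈ (↑(Q \ T) : Set J))
  refine ⟨fun j => if j ∈ Q then ι j else j, fun a ha b hb hab => ?_, fun j hj => ?_⟩
  · simp only [coe_compl, Set.mem_compl_iff, mem_coe] at ha hb
    by_cases haQ : a ∈ Q <;> by_cases hbQ : b ∈ Q <;>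
      simp only [haQ, hbQ, if_true, if_false] at hab
    · exact hinj (by simpa using ⟨haQ, ha⟩) (by simpa using ⟨hbQ, hb⟩) hab
    · exact absurd (hab ▸ (hι a haQ ha).1) hb
    · exact absurd (hab ▸ (hι b hbQ hb).1) ha
    · exact hab
  · by_cases hjQ : j ∈ Q
    · simp [hjQ, hι j hjQ hj]
    · simp [hjQ]

lemma apply_eq_sum_of_card_filter_pos_le_one {K : Type*} [AddCommMonoid K] [LinearOrder K]
    {g : M → K} (hg : ∀ i, 0 ≤ g i)
    (h1 : (univ.filter fun i => 0 < g i).card ≤ 1) {i : M} (hi : 0 < g i) :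
    g i = ∑ i, g i := by
  refine (sum_eq_single i (fun b _ hb => ?_) (by simp)).symm
  by_contra hne
  exact hb (card_le_one.1 h1 b (by simpa using (hg b).lt_of_ne' hne) i (by simpa using hi))

section Forward

variable {K : Type*} [AddCommGroup K] [LinearOrder K] [IsOrderedAddMonoid K]

lemma exists_eq_of_notMem_splitJobs {f : J → M → K} (hf : ∀ j i, 0 ≤ f j i)
    {x : J → K} (hfx : ∀ j, ∑ i, f j i = x j) (hx : ∀ j, 0 < x j) :
    ∃ g : J → M, ∀ j ∉ splitJobs f, f j (g j) = x j := by
  have hpos : ∀ j, ∃ i, 0 < f j i := fun j => by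
    simpa using exists_lt_of_sum_lt (s := univ) (f := 0) (g := f j) (by simpa [hfx] using hx j)
  choose g hg using hpos
  refine ⟨g, fun j hj => ?_⟩
  rw [← hfx]
  exact apply_eq_sum_of_card_filter_pos_le_one (hf j) (by simpa [splitJobs] using hj) (hg j)

lemma exists_partition_le_of_card_splitJobs_le [DecidableEq J] [DecidableEq M]
    {f : J → M → K} (hf : ∀ j i, 0 ≤ f j i) {x : J → K} (hfx : ∀ j, ∑ i, f j i = x j)
    (hx : ∀ j, 0 < x j)
    {T : Finset J} (hlong : ∀ j ∉ T, ∀ j' ∈ T, x j ≤ x j')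
    (hsplit : (splitJobs f).card ≤ T.card) :
    ∃ P : J → M, ∀ i, ∑ j ∈ Tᶜ.filter (fun j => P j = i), x j ≤ ∑ j, f j i := by
  obtain ⟨g, hg⟩ := exists_eq_of_notMem_splitJobs hf hfx hx
  obtain ⟨φ, hφinj, hφ⟩ := exists_injOn_compl_of_card_le hsplit
  refine ⟨g ∘ φ, fun i => ?_⟩
  set F := Tᶜ.filter fun j => g (φ j) = i
  have hFT : ∀ j ∈ F, j ∉ T := fun j hj => mem_compl.1 (mem_filter.1 hj).1
  calc ∑ j ∈ F, x j ≤ ∑ j ∈ F, x (φ j) := sum_le_sum fun j hj => by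
        rcases (hφ j (hFT j hj)).2 with h | h
        · exact hlong j (hFT j hj) _ h
        · rw [h]
    _ = ∑ j ∈ F, f (φ j) i := sum_congr rfl fun j hj => by
        rw [← (mem_filter.1 hj).2, hg _ (hφ j (hFT j hj)).1]
    _ = ∑ k ∈ F.image φ, f k i :=
        (sum_image (f := fun k => f k i) fun a ha b hb =>
          hφinj (by simpa using hFT a ha) (by simpa using hFT b hb)).symm
    _ ≤ ∑ k, f k i := sum_le_sum_of_subset_of_nonneg (subset_univ _) fun k _ _ => hf k i

end Forward

lemma card_filter_pos_ite_eq_le_one [DecidableEq M] {K : Type*} [Zero K] [LinearOrder K]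
    (a : M) (c : K) :
    (univ.filter fun i => 0 < if a = i then c else 0).card ≤ 1 :=
  (card_le_card (t := {a}) fun i hi => mem_singleton.2 <| by
    by_contra h
    simp [Ne.symm h] at hi).trans (card_singleton a).le

lemma exists_allocation_of_partition_le [DecidableEq J] [DecidableEq M]
    {K : Type*} [Field K] [LinearOrder K] [IsStrictOrderedRing K]
    {x : J → K} (hx : ∀ j, 0 < x j)
    {T : Finset J} {P : J → M} {B : M → K}
    (hP : ∀ i, ∑ j ∈ Tᶜ.filter (fun j => P j = i), x j ≤ B i) (hB : ∑ j, x j ≤ ∑ i, B i) :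
    ∃ f : J → M → K, (∀ j i, 0 ≤ f j i) ∧ (∀ j, ∑ i, f j i = x j) ∧ splitJobs f ⊆ T ∧
      ∀ i, ∑ j, f j i ≤ B i := by
  set load : M → K := fun i => ∑ j ∈ Tᶜ.filter (fun j => P j = i), x j
  set slack : M → K := fun i => B i - load i
  set total : K := ∑ i, slack i
  have hslack : ∀ i, 0 ≤ slack i := fun i => sub_nonneg.2 (hP i)
  have htotal_nonneg : 0 ≤ total := sum_nonneg fun i _ => hslack i
  have hT_le : ∑ j ∈ T, x j ≤ total := by
    have hload : ∑ i, load i = ∑ j ∈ Tᶜ, x j := sum_fiberwise Tᶜ P x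
    have hsum := sum_add_sum_compl T x
    simp only [total, slack, sum_sub_distrib, hload]
    linarith
  refine ⟨fun j i => if j ∈ T then x j * slack i / total else if P j = i then x j else 0,
    fun j i => ?_, fun j => ?_, fun j hj => ?_, fun i => ?_⟩
  · dsimp only
    split_ifs
    exacts [div_nonneg (mul_nonneg (hx j).le (hslack i)) htotal_nonneg, (hx j).le, le_rfl]
  · by_cases hj : j ∈ T
    · have htotal : 0 < total :=
        (hx j).trans_le ((single_le_sum (fun j _ => (hx j).le) hj).trans hT_le)
      simp only [hj, if_true]
      rw [← sum_div, ← mul_sum, mul_div_assoc, div_self htotal.ne', mul_one]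
    · simp [hj]
  · by_contra hjT
    simp only [splitJobs, hjT, if_false, mem_filter, mem_univ, true_and] at hj
    exact hj.not_ge (card_filter_pos_ite_eq_le_one (P j) (x j))
  · -- `total = 0` is possible when `T = ∅`, so `total` must not be cancelled here
    have hTi : ∑ j ∈ T, x j * slack i / total ≤ slack i := by
      rw [← sum_div, ← sum_mul]
      exact div_le_of_le_mul₀ htotal_nonneg (hslack i)
        (by rw [mul_comm]; exact mul_le_mul_of_nonneg_left hT_le (hslack i))
    rw [sum_ite, filter_not, filter_mem_eq_inter, univ_inter, ← compl_eq_univ_sdiff,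
      ← sum_filter]
    linarith [show slack i + load i = B i from sub_add_cancel _ _]

end Allocation

theorem stmt_11_general (m n s : ℕ) (hn : 2 ≤ n)
    (t : ℚ) (ht : 0 ≤ t)
    (x : Fin m → ℕ) (hx : ∀ j, 0 < x j)
    (r : Fin n → ℕ) (hr : ∀ i, 0 < r i)
    (S : ℚ) (hS : S = (∑ j, (x j : ℚ)) / ((∑ i, r i : ℕ) : ℚ))
    (T : Finset (Fin m)) (hT : T.card = s)
    (hlong : ∀ j ∉ T, ∀ j' ∈ T, x j ≤ x j') :
    (∃ f : Fin m → Fin n → ℚ,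
        (∀ j i, 0 ≤ f j i) ∧
        (∀ j, ∑ i, f j i = (x j : ℚ)) ∧
        (Finset.univ.filter (fun j =>
            1 < (Finset.univ.filter (fun i => 0 < f j i)).card)).card ≤ s ∧
        (∀ i, (∑ j, f j i) / (r i : ℚ) ≤ (1 + t) * S)) ↔
    (∃ P : Fin m → Fin n, ∀ i,
        (∑ j ∈ Tᶜ.filter (fun j => P j = i), (x j : ℚ)) / (r i : ℚ) ≤ (1 + t) * S) := by
  have hr' : ∀ i, (0 : ℚ) < r i := fun i => by exact_mod_cast hr i
  have hx' : ∀ j, (0 : ℚ) < x j := fun j => by exact_mod_cast hx j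
  have hA : (0 : ℚ) < ((∑ i, r i : ℕ) : ℚ) := by
    exact_mod_cast sum_pos (fun i _ => hr i) ⟨⟨0, by omega⟩, mem_univ _⟩
  have hcap : ∑ j, (x j : ℚ) ≤ ∑ i, (1 + t) * S * r i := by
    have hS0 : 0 ≤ S := hS ▸ div_nonneg (sum_nonneg fun j _ => (hx' j).le) hA.le
    calc ∑ j, (x j : ℚ) = S * ((∑ i, r i : ℕ) : ℚ) := by rw [hS, div_mul_cancel₀ _ hA.ne']
      _ ≤ (1 + t) * S * ((∑ i, r i : ℕ) : ℚ) := by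
        gcongr; exact le_mul_of_one_le_left hS0 (by linarith)
      _ = ∑ i, (1 + t) * S * r i := by push_cast; rw [mul_sum]
  simp only [div_le_iff₀ (hr' _)]
  constructor
  · rintro ⟨f, hf0, hfx, hsplit, hload⟩
    obtain ⟨P, hP⟩ := exists_partition_le_of_card_splitJobs_le hf0 hfx hx'
      (fun j hj j' hj' => by exact_mod_cast hlong j hj j' hj') (hsplit.trans hT.ge)
    exact ⟨P, fun i => (hP i).trans (hload i)⟩
  · rintro ⟨P, hP⟩
    obtain ⟨f, hf0, hfx, hsplit, hload⟩ := exists_allocation_of_partition_le hx' hP hcap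
    exact ⟨f, hf0, hfx, (card_le_card hsplit).trans hT.le, hload⟩

/-- reduction from split jobs to interval target (uniform machines).
`X` admits a fractional allocation with at most `s` split jobs and makespan at most `(1+t)·S`
iff `X′ = X` minus some `s` longest jobs admits an integral partition with makespan
at most `(1+t)·S`. -/
theorem stmt_11 (m n s : ℕ) (hn : 2 ≤ n) (hm : s < m)
    (t : ℚ) (ht : 0 ≤ t)
    (x : Fin m → ℕ) (hx : ∀ j, 0 < x j)
    (r : Fin n → ℕ) (hr : ∀ i, 0 < r i)
    (S : ℚ) (hS : S = (∑ j, (x j : ℚ)) / ((∑ i, r i : ℕ) : ℚ))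
    (T : Finset (Fin m)) (hT : T.card = s)
    (hlong : ∀ j ∉ T, ∀ j' ∈ T, x j ≤ x j') :
    (∃ f : Fin m → Fin n → ℚ,
        (∀ j i, 0 ≤ f j i) ∧
        (∀ j, ∑ i, f j i = (x j : ℚ)) ∧
        (Finset.univ.filter (fun j =>
            1 < (Finset.univ.filter (fun i => 0 < f j i)).card)).card ≤ s ∧
        (∀ i, (∑ j, f j i) / (r i : ℚ) ≤ (1 + t) * S)) ↔
    (∃ P : Fin m → Fin n, ∀ i,
        (∑ j ∈ Tᶜ.filter (fun j => P j = i), (x j : ℚ)) / (r i : ℚ) ≤ (1 + t) * S) :=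
  stmt_11_general m n s hn t ht x hx r hr S hS T hT hlong
end
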